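/- arXiv:1704.05198 — 4 statements merged into one kernel-verified Lean document; each statement's English description precedes it below -/
import Mathlib

section
/- Let 1 ≤ p < ∞ and let U ⊂ ℝ be a nonempty open bounded interval. Let u : U → ℝ be Lipschitz (hence differentiable a.e. with derivative u'), and set c := (1/|U|) ∫_U (u(x) − x) dx. Then ∫_U |u(x) − (x + c)|^p dx ≤ |U|^p ∫_U |1 − u'(x)|^p dx. -/
/-! Put `w x = u x - x`, so that `c` is the mean of `w` over `U`. Since `u` is absolutely
continuous on compact subintervals of `U`, `w x - w y = -∫_y^x (1 - u')`, so any two values of `w`,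
and hence also `w x` and its mean `c`, differ by at most `A := ∫_U |1 - u'|`. This gives
`∫_U |w - c|^p ≤ |U| A^p`, and Jensen's inequality for `t ↦ t^p` gives
`A^p ≤ |U|^(p-1) ∫_U |1 - u'|^p`. -/

open MeasureTheory Set

section Average

variable {α : Type*} [MeasurableSpace α] {μ : Measure α} {s : Set α} {f : α → ℝ} {p : ℝ}

theorem rpow_setIntegral_le_measureReal_rpow_mul (hp : 1 ≤ p) (h0 : μ s ≠ 0) (hs : μ s ≠ ⊤)
    (hf : ∀ᵐ x ∂μ.restrict s, 0 ≤ f x) (hfi : IntegrableOn f s μ)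
    (hfpi : IntegrableOn (fun x ↦ f x ^ p) s μ) :
    (∫ x in s, f x ∂μ) ^ p ≤ μ.real s ^ (p - 1) * ∫ x in s, f x ^ p ∂μ := by
  have hm : 0 < μ.real s := ENNReal.toReal_pos h0 hs
  have hI : 0 ≤ ∫ x in s, f x ∂μ := integral_nonneg_of_ae hf
  have jensen : (⨍ x in s, f x ∂μ) ^ p ≤ ⨍ x in s, f x ^ p ∂μ :=
    (convexOn_rpow hp).map_set_average_le (Real.continuous_rpow_const (by linarith)).continuousOn
      isClosed_Ici h0 hs hf hfi hfpi
  rw [setAverage_eq, setAverage_eq, smul_eq_mul, smul_eq_mul,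
    Real.mul_rpow (inv_nonneg.2 hm.le) hI, Real.inv_rpow hm.le] at jensen
  calc (∫ x in s, f x ∂μ) ^ p
      = μ.real s ^ p * ((μ.real s ^ p)⁻¹ * (∫ x in s, f x ∂μ) ^ p) := by field_simp
    _ ≤ μ.real s ^ p * ((μ.real s)⁻¹ * ∫ x in s, f x ^ p ∂μ) := by gcongr
    _ = μ.real s ^ (p - 1) * ∫ x in s, f x ^ p ∂μ := by
        rw [Real.rpow_sub_one hm.ne']; ring

theorem abs_sub_setAverage_le {x : α} {A : ℝ} (hsm : MeasurableSet s) (h0 : μ s ≠ 0)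
    (hs : μ s ≠ ⊤) (hfi : IntegrableOn f s μ) (hA : ∀ y ∈ s, |f x - f y| ≤ A) :
    |f x - ⨍ y in s, f y ∂μ| ≤ A := by
  have hmem : ⨍ y in s, f y ∂μ ∈ Icc (f x - A) (f x + A) := by
    refine (convex_Icc _ _).set_average_mem isClosed_Icc h0 hs ?_ hfi
    filter_upwards [ae_restrict_mem hsm] with y hy
    have := abs_le.1 (hA y hy)
    constructor <;> linarith [this.1, this.2]
  rw [abs_sub_le_iff]
  constructor <;> linarith [hmem.1, hmem.2]

end Average

section Lipschitz

variable {u : ℝ → ℝ} {K : NNReal} {a b : ℝ}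

theorem LipschitzOnWith.integrableOn_Ioo (hu : LipschitzOnWith K u (Ioo a b)) :
    IntegrableOn u (Ioo a b) := by
  obtain ⟨g, hg, hug⟩ := hu.extend_real
  exact (hg.continuous.integrableOn_Icc.mono_set Ioo_subset_Icc_self).congr_fun hug.symm
    measurableSet_Ioo

theorem LipschitzOnWith.integrableOn_Ioo_comp_deriv (hu : LipschitzOnWith K u (Ioo a b))
    {φ : ℝ → ℝ} (hφ : Continuous φ) : IntegrableOn (fun t ↦ φ (deriv u t)) (Ioo a b) := by
  obtain ⟨M, hM⟩ := (isCompact_Icc (a := -(K : ℝ)) (b := K)).exists_bound_of_continuousOn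
    hφ.continuousOn
  refine Measure.integrableOn_of_bounded measure_Ioo_lt_top.ne
    (hφ.measurable.comp (measurable_deriv u)).aestronglyMeasurable (M := M) ?_
  filter_upwards [ae_restrict_mem measurableSet_Ioo] with t ht
  refine hM _ (abs_le.1 ?_)
  simpa using norm_deriv_le_of_lipschitzOn (isOpen_Ioo.mem_nhds ht) hu

theorem LipschitzOnWith.abs_sub_sub_le_setIntegral (hu : LipschitzOnWith K u (Ioo a b))
    {x y : ℝ} (hx : x ∈ Ioo a b) (hy : y ∈ Ioo a b) :
    |(u x - x) - (u y - y)| ≤ ∫ t in Ioo a b, |1 - deriv u t| := by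
  wlog hyx : y ≤ x generalizing x y
  · rw [abs_sub_comm]
    exact this hy hx (le_of_not_ge hyx)
  have hsub : Icc y x ⊆ Ioo a b := Icc_subset_Ioo hy.1 hx.2
  have hac : AbsolutelyContinuousOnInterval u y x :=
    (hu.mono (by rwa [uIcc_of_le hyx])).absolutelyContinuousOnInterval
  have hftc : ∫ t in y..x, (1 - deriv u t) = (x - y) - (u x - u y) := by
    rw [intervalIntegral.integral_sub intervalIntegrable_const hac.intervalIntegrable_deriv,
      hac.integral_deriv_eq_sub]
    simp
  calc |(u x - x) - (u y - y)| = |∫ t in y..x, (1 - deriv u t)| := by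
        rw [hftc, ← abs_neg]; ring_nf
    _ ≤ ∫ t in y..x, |1 - deriv u t| := intervalIntegral.abs_integral_le_integral_abs hyx
    _ ≤ ∫ t in Ioo a b, |1 - deriv u t| := by
        rw [intervalIntegral.integral_of_le hyx]
        exact setIntegral_mono_set
          (hu.integrableOn_Ioo_comp_deriv (φ := fun d ↦ |1 - d|) (by fun_prop))
          (.of_forall fun _ ↦ abs_nonneg _) (Ioc_subset_Icc_self.trans hsub).eventuallyLE

end Lipschitz

theorem stmt_0 (p : ℝ) (hp : 1 ≤ p) (a b : ℝ) (hab : a < b)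
    (u : ℝ → ℝ) (K : NNReal) (hu : LipschitzOnWith K u (Ioo a b)) :
    (∫ x in Ioo a b, |u x - (x + (b - a)⁻¹ * ∫ y in Ioo a b, (u y - y))| ^ p)
      ≤ (b - a) ^ p * ∫ x in Ioo a b, |1 - deriv u x| ^ p := by
  have hvol : volume.real (Ioo a b) = b - a := Real.volume_real_Ioo_of_le hab.le
  have h0 : volume (Ioo a b) ≠ 0 := by simp [hab]
  have hfin : volume (Ioo a b) ≠ ⊤ := measure_Ioo_lt_top.ne
  set c := (b - a)⁻¹ * ∫ y in Ioo a b, (u y - y)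
  set A := ∫ t in Ioo a b, |1 - deriv u t|
  have hc : c = ⨍ y in Ioo a b, (u y - y) := by rw [setAverage_eq, hvol, smul_eq_mul]
  have hpoint : ∀ x ∈ Ioo a b, |u x - (x + c)| ^ p ≤ A ^ p := by
    intro x hx
    gcongr
    rw [hc, ← sub_sub]
    exact abs_sub_setAverage_le (f := fun y ↦ u y - y) measurableSet_Ioo h0 hfin
      (hu.integrableOn_Ioo.sub (continuous_id.integrableOn_Icc.mono_set Ioo_subset_Icc_self))
      fun y hy ↦ hu.abs_sub_sub_le_setIntegral hx hy
  have hjensen : A ^ p ≤ (b - a) ^ (p - 1) * ∫ x in Ioo a b, |1 - deriv u x| ^ p := by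
    rw [← hvol]
    exact rpow_setIntegral_le_measureReal_rpow_mul hp h0 hfin (.of_forall fun _ ↦ abs_nonneg _)
      (hu.integrableOn_Ioo_comp_deriv (φ := fun d ↦ |1 - d|) (by fun_prop))
      (hu.integrableOn_Ioo_comp_deriv (φ := fun d ↦ |1 - d| ^ p)
        ((continuous_const.sub continuous_id).abs.rpow_const fun _ ↦ Or.inr (by linarith)))
  have hL : b - a ≠ 0 := (sub_pos.2 hab).ne'
  calc (∫ x in Ioo a b, |u x - (x + c)| ^ p)
      ≤ A ^ p * volume.real (Ioo a b) :=
        (le_abs_self _).trans (norm_setIntegral_le_of_norm_le_const measure_Ioo_lt_top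
          fun x hx ↦ (Real.norm_of_nonneg (by positivity)).trans_le (hpoint x hx))
    _ ≤ (b - a) ^ (p - 1) * (∫ x in Ioo a b, |1 - deriv u x| ^ p) * (b - a) := by
        rw [hvol]; gcongr
    _ = (b - a) ^ p * ∫ x in Ioo a b, |1 - deriv u x| ^ p := by
        rw [Real.rpow_sub_one hL]; field_simp
end

section
/- Let A be a real n×n matrix with det A > 0, and let 0 < a_1 ≤ ⋯ ≤ a_n be the singular values of A (the eigenvalues of the positive square root of A Aᵀ). Then dist²(A, SL(n)) = min{ Σ_{j=1}^n (c_j − a_j)² : c_j > 0 for all j and Π_{j=1}^n c_j = 1 }, and moreover this minimum is attained by some (d_1,…,d_n) with 0 < d_1 ≤ ⋯ ≤ d_n and Π_{j=1}^n d_j = 1. -/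
/-!
Write `A = M diag(a) Nᵀ` with `M`, `N` orthogonal; `det A > 0` forces `det M det N = 1`,
so `B ↦ Mᵀ B N` preserves `SL(n)` and Frobenius distances, and
`dist(A, SL(n)) = dist(diag a, SL(n))`.
For `B = U diag(s) Vᵀ ∈ SL(n)`, expanding `|diag a - B|²` reduces the lower bound
`|diag a - B|² ≥ Σ (c_j - a_j)²`, with `c` the increasing rearrangement of `s`, to the trace
inequality `tr(diag(a) B) ≤ Σ a_j c_j`. Since `U_im V_im ≤ (U_im² + V_im²)/2` and the matrix
of these averages is doubly stochastic, Birkhoff's theorem reduces that to the rearrangement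
inequality. The infimum over `c` is attained by compactness, and sorting a minimiser keeps it one.
-/

open Matrix

noncomputable section

/-- Frobenius norm of a real square matrix. -/
def frob {ι : Type*} [Fintype ι] (A : Matrix ι ι ℝ) : ℝ :=
  Real.sqrt (∑ i, ∑ j, (A i j) ^ 2)

/-- Frobenius distance from a matrix to `SL(n)`. -/
def distSL {n : ℕ} (A : Matrix (Fin n) (Fin n) ℝ) : ℝ :=
  sInf {r : ℝ | ∃ B : Matrix (Fin n) (Fin n) ℝ, B.det = 1 ∧ r = frob (A - B)}

section Frobenius

variable {ι : Type*} [Fintype ι]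

lemma frob_nonneg (X : Matrix ι ι ℝ) : 0 ≤ frob X := Real.sqrt_nonneg _

lemma sq_frob (X : Matrix ι ι ℝ) : frob X ^ 2 = trace (Xᵀ * X) := by
  rw [frob, Real.sq_sqrt (by positivity)]
  simp only [trace, diag_apply, mul_apply, transpose_apply, sq]
  exact Finset.sum_comm

lemma sq_frob_diagonal [DecidableEq ι] (v : ι → ℝ) :
    frob (diagonal v) ^ 2 = ∑ i, v i ^ 2 := by
  rw [sq_frob, diagonal_transpose, diagonal_mul_diagonal, trace_diagonal]
  simp only [sq]

lemma sq_frob_sub (X Y : Matrix ι ι ℝ) :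
    frob (X - Y) ^ 2 = frob X ^ 2 - 2 * trace (Xᵀ * Y) + frob Y ^ 2 := by
  have hswap : trace (Yᵀ * X) = trace (Xᵀ * Y) := by
    rw [← trace_transpose, transpose_mul, transpose_transpose]
  simp only [sq_frob, transpose_sub, sub_mul, mul_sub, trace_sub, hswap]
  ring

lemma frob_mul_mul_transpose [DecidableEq ι] {P Q : Matrix ι ι ℝ} (hP : Pᵀ * P = 1)
    (hQ : Qᵀ * Q = 1) (X : Matrix ι ι ℝ) : frob (P * X * Qᵀ) = frob X := by
  refine (sq_eq_sq₀ (frob_nonneg _) (frob_nonneg _)).1 ?_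
  calc frob (P * X * Qᵀ) ^ 2 = trace (Q * (Xᵀ * (Pᵀ * P) * X) * Qᵀ) := by
        simp only [sq_frob, transpose_mul, transpose_transpose, Matrix.mul_assoc]
    _ = frob X ^ 2 := by rw [hP, Matrix.mul_one, trace_mul_cycle, hQ, Matrix.one_mul, sq_frob]

end Frobenius

section SingularValues

variable {ι : Type*} [Fintype ι] [DecidableEq ι]

lemma exists_eq_mul_diagonal_mul_transpose {X M : Matrix ι ι ℝ} {s : ι → ℝ}
    (hM : Mᵀ * M = 1) (hs : ∀ i, s i ≠ 0)
    (hX : Mᵀ * (X * Xᵀ) * M = diagonal fun i => s i ^ 2) :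
    ∃ N : Matrix ι ι ℝ, Nᵀ * N = 1 ∧ X = M * diagonal s * Nᵀ := by
  have hinv : diagonal s * diagonal s⁻¹ = 1 := by
    rw [diagonal_mul_diagonal, ← diagonal_one]
    exact congrArg diagonal (funext fun i => mul_inv_cancel₀ (hs i))
  refine ⟨Xᵀ * M * diagonal s⁻¹, ?_, ?_⟩
  · calc (Xᵀ * M * diagonal s⁻¹)ᵀ * (Xᵀ * M * diagonal s⁻¹)
          = diagonal s⁻¹ * (Mᵀ * (X * Xᵀ) * M) * diagonal s⁻¹ := by
            simp only [transpose_mul, transpose_transpose, diagonal_transpose, Matrix.mul_assoc]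
      _ = 1 := by
        rw [hX, diagonal_mul_diagonal, diagonal_mul_diagonal, ← diagonal_one]
        refine congrArg diagonal (funext fun i => ?_)
        simp only [Pi.inv_apply]
        field_simp [hs i]
  · calc X = M * (diagonal s * diagonal s⁻¹) * (Mᵀ * X) := by
          rw [hinv, Matrix.mul_one, ← Matrix.mul_assoc, mul_eq_one_comm.mp hM, Matrix.one_mul]
      _ = M * diagonal s * (Xᵀ * M * diagonal s⁻¹)ᵀ := by
          simp only [transpose_mul, transpose_transpose, diagonal_transpose, Matrix.mul_assoc]

lemma exists_svd_of_det_ne_zero {B : Matrix ι ι ℝ} (hB : B.det ≠ 0) :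
    ∃ (U V : Matrix ι ι ℝ) (s : ι → ℝ),
      Uᵀ * U = 1 ∧ Vᵀ * V = 1 ∧ (∀ i, 0 < s i) ∧ B = U * diagonal s * Vᵀ := by
  have hH : (B * Bᴴ).IsHermitian := isHermitian_mul_conjTranspose_self B
  set U : Matrix ι ι ℝ := (hH.eigenvectorUnitary : Matrix ι ι ℝ)
  set lam := hH.eigenvalues
  have hU : star U * U = 1 := mem_unitaryGroup_iff'.mp hH.eigenvectorUnitary.2
  have hdiag : star U * (B * Bᴴ) * U = diagonal (RCLike.ofReal ∘ lam) := by
    rw [← Unitary.conjStarAlgAut_star_apply (S := ℝ) hH.eigenvectorUnitary]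
    exact hH.conjStarAlgAut_star_eigenvectorUnitary
  have hdet : (B * Bᴴ).det = ∏ i, (lam i : ℝ) := hH.det_eq_prod_eigenvalues
  have hnonneg : ∀ i, 0 ≤ lam i := eigenvalues_self_mul_conjTranspose_nonneg B
  -- Forget the definitions, so that rewriting `Bᴴ` to `Bᵀ` leaves `hH` (inside `lam`) alone.
  clear_value lam U
  simp only [star_eq_conjTranspose, conjTranspose_eq_transpose_of_trivial] at hU hdiag hdet
  have hpos i : 0 < lam i := by
    refine (hnonneg i).lt_of_ne' fun hi => hB ?_
    simpa [Finset.prod_eq_zero (Finset.mem_univ i) hi] using hdet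
  obtain ⟨V, hV, hBV⟩ := exists_eq_mul_diagonal_mul_transpose (s := fun i => √(lam i))
    hU (fun i => (Real.sqrt_pos.2 (hpos i)).ne')
    (by simpa [Real.sq_sqrt (hpos _).le] using hdiag)
  exact ⟨U, V, _, hU, hV, fun i => Real.sqrt_pos.2 (hpos i), hBV⟩

lemma det_mul_det_eq_one_of_orthogonal {P Q X : Matrix ι ι ℝ} (hP : Pᵀ * P = 1)
    (hQ : Qᵀ * Q = 1) (hX : 0 < X.det) (hPXQ : 0 < (P * X * Qᵀ).det) : P.det * Q.det = 1 := by
  have hsq {R : Matrix ι ι ℝ} (hR : Rᵀ * R = 1) : R.det * R.det = 1 := by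
    simpa using congrArg det hR
  rw [det_mul, det_mul, det_transpose] at hPXQ
  have : 0 < P.det * Q.det := pos_of_mul_pos_left (by linarith) hX.le
  nlinarith [hsq hP, hsq hQ]

end SingularValues

section TraceInequality

lemma dotProduct_mulVec_le_of_mem_doublyStochastic {ι : Type*} [Fintype ι] [DecidableEq ι]
    {S : Matrix ι ι ℝ} (hS : S ∈ doublyStochastic ℝ ι) {a d : ι → ℝ} {C : ℝ}
    (h : ∀ σ : Equiv.Perm ι, a ⬝ᵥ (d ∘ σ) ≤ C) : a ⬝ᵥ (S *ᵥ d) ≤ C := by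
  have hlin : IsLinearMap ℝ fun T : Matrix ι ι ℝ => a ⬝ᵥ (T *ᵥ d) :=
    ⟨fun _ _ => by simp only [add_mulVec, dotProduct_add],
      fun _ _ => by simp only [smul_mulVec, dotProduct_smul]⟩
  rw [← SetLike.mem_coe, doublyStochastic_eq_convexHull_permMatrix] at hS
  refine convexHull_min ?_ (convex_halfSpace_le hlin C) hS
  rintro _ ⟨σ, rfl⟩
  simpa [permMatrix_mulVec] using h σ

lemma map_sq_mem_doublyStochastic {ι : Type*} [Fintype ι] [DecidableEq ι] {U : Matrix ι ι ℝ}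
    (hU : Uᵀ * U = 1) : U.map (· ^ 2) ∈ doublyStochastic ℝ ι := by
  have hU' : U * Uᵀ = 1 := mul_eq_one_comm.mp hU
  refine mem_doublyStochastic_iff_sum.2 ⟨fun i j => sq_nonneg _, fun i => ?_, fun j => ?_⟩
  · simpa [mul_apply, sq] using congrFun (congrFun hU' i) i
  · simpa [mul_apply, sq] using congrFun (congrFun hU j) j

variable {n : ℕ}

lemma sum_mul_comp_perm_le_sum_mul_sort {a : Fin n → ℝ} (ha : Monotone a) (s : Fin n → ℝ)
    (σ : Equiv.Perm (Fin n)) : ∑ i, a i * s (σ i) ≤ ∑ i, a i * s (Tuple.sort s i) := by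
  have hmv : Monovary a (s ∘ Tuple.sort s) := ha.monovary (Tuple.monotone_sort s)
  simpa using hmv.sum_mul_comp_perm_le_sum_mul (σ := σ.trans (Tuple.sort s).symm)

lemma trace_diagonal_mul_le_sum_mul_sort {a s : Fin n → ℝ} (ha : Monotone a)
    (ha0 : ∀ i, 0 ≤ a i) (hs0 : ∀ i, 0 ≤ s i) {U V : Matrix (Fin n) (Fin n) ℝ}
    (hU : Uᵀ * U = 1) (hV : Vᵀ * V = 1) :
    trace (diagonal a * (U * diagonal s * Vᵀ)) ≤ ∑ i, a i * s (Tuple.sort s i) := by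
  set S : Matrix (Fin n) (Fin n) ℝ :=
    (1 / 2 : ℝ) • U.map (· ^ 2) + (1 / 2 : ℝ) • V.map (· ^ 2)
  have hS : S ∈ doublyStochastic ℝ (Fin n) :=
    convex_doublyStochastic (map_sq_mem_doublyStochastic hU) (map_sq_mem_doublyStochastic hV)
      (by norm_num) (by norm_num) (by norm_num)
  calc trace (diagonal a * (U * diagonal s * Vᵀ))
        = ∑ i, ∑ m, a i * s m * (U i m * V i m) := by
        simp only [trace, diag_apply, diagonal_mul, mul_apply (M := U * diagonal s), mul_diagonal,
          transpose_apply, Finset.mul_sum]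
        exact Finset.sum_congr rfl fun i _ => Finset.sum_congr rfl fun m _ => by ring
    _ ≤ ∑ i, ∑ m, a i * (S i m * s m) := by
        refine Finset.sum_le_sum fun i _ => Finset.sum_le_sum fun m _ => ?_
        have hUV : U i m * V i m ≤ S i m := by
          simp only [S, Matrix.add_apply, Matrix.smul_apply, map_apply, smul_eq_mul]
          nlinarith [sq_nonneg (U i m - V i m)]
        nlinarith [mul_le_mul_of_nonneg_left hUV (mul_nonneg (ha0 i) (hs0 m))]
    _ = a ⬝ᵥ (S *ᵥ s) := by simp only [dotProduct, mulVec, Finset.mul_sum]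
    _ ≤ ∑ i, a i * s (Tuple.sort s i) :=
        dotProduct_mulVec_le_of_mem_doublyStochastic hS fun σ =>
          sum_mul_comp_perm_le_sum_mul_sort ha s σ

end TraceInequality

section Minimization

variable {ι : Type*} [Fintype ι]

lemma sum_sub_sq (c a : ι → ℝ) :
    ∑ j, (c j - a j) ^ 2 = ∑ j, c j ^ 2 - 2 * ∑ j, c j * a j + ∑ j, a j ^ 2 := by
  simp only [sub_sq, Finset.sum_add_distrib, Finset.sum_sub_distrib, Finset.mul_sum, mul_assoc]

lemma exists_forall_sum_sub_sq_le (a : ι → ℝ) :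
    ∃ d : ι → ℝ, (∀ j, 0 < d j) ∧ ∏ j, d j = 1 ∧
      ∀ c : ι → ℝ, (∀ j, 0 < c j) → ∏ j, c j = 1 →
        ∑ j, (d j - a j) ^ 2 ≤ ∑ j, (c j - a j) ^ 2 := by
  set f : (ι → ℝ) → ℝ := fun c => ∑ j, (c j - a j) ^ 2
  have hf : Continuous f := by fun_prop
  set R := f 1
  set K : Set (ι → ℝ) := {c | (∀ j, 0 ≤ c j) ∧ ∏ j, c j = 1 ∧ f c ≤ R}
  have hKsub : K ⊆ Metric.closedBall a √R := by
    refine fun c hc => (dist_pi_le_iff (Real.sqrt_nonneg _)).2 fun j => ?_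
    rw [Real.dist_eq, ← Real.sqrt_sq_eq_abs]
    exact Real.sqrt_le_sqrt <| (Finset.single_le_sum (fun i _ => sq_nonneg (c i - a i))
      (Finset.mem_univ j)).trans hc.2.2
  have hKclosed : IsClosed K := by
    simp only [K, Set.ofPred_and, Set.ofPred_forall]
    exact (isClosed_iInter fun j => isClosed_le continuous_const (continuous_apply j)).inter
      ((isClosed_eq (by fun_prop) continuous_const).inter (isClosed_le hf continuous_const))
  have hK : IsCompact K := (isCompact_closedBall a √R).of_isClosed_subset hKclosed hKsub
  obtain ⟨d, ⟨hd0, hdprod, hdR⟩, hdmin⟩ :=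
    hK.exists_isMinOn ⟨1, fun _ => zero_le_one, by simp, le_rfl⟩ hf.continuousOn
  have hdpos : ∀ j, 0 < d j := fun j => (hd0 j).lt_of_ne' fun h => by
    simp [Finset.prod_eq_zero (Finset.mem_univ j) h] at hdprod
  refine ⟨d, hdpos, hdprod, fun c hc hcprod => ?_⟩
  rcases le_or_gt (f c) R with hcR | hcR
  · exact hdmin ⟨fun j => (hc j).le, hcprod, hcR⟩
  · exact hdR.trans hcR.le

variable {n : ℕ}

lemma sum_sort_sub_sq_le {a : Fin n → ℝ} (ha : Monotone a) (d : Fin n → ℝ) :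
    ∑ j, (d (Tuple.sort d j) - a j) ^ 2 ≤ ∑ j, (d j - a j) ^ 2 := by
  have hmv : Monovary (d ∘ Tuple.sort d) a := (Tuple.monotone_sort d).monovary ha
  have hcross : ∑ j, d j * a j ≤ ∑ j, d (Tuple.sort d j) * a j := by
    simpa using hmv.sum_comp_perm_mul_le_sum_mul (σ := (Tuple.sort d).symm)
  have hsq : ∑ j, d (Tuple.sort d j) ^ 2 = ∑ j, d j ^ 2 :=
    Equiv.sum_comp (Tuple.sort d) fun j => d j ^ 2
  rw [sum_sub_sq, sum_sub_sq, hsq]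
  linarith

lemma exists_monotone_forall_sum_sub_sq_le {a : Fin n → ℝ} (ha : Monotone a) :
    ∃ d : Fin n → ℝ, Monotone d ∧ (∀ j, 0 < d j) ∧ ∏ j, d j = 1 ∧
      ∀ c : Fin n → ℝ, (∀ j, 0 < c j) → ∏ j, c j = 1 →
        ∑ j, (d j - a j) ^ 2 ≤ ∑ j, (c j - a j) ^ 2 := by
  obtain ⟨d, hdpos, hdprod, hdmin⟩ := exists_forall_sum_sub_sq_le a
  refine ⟨d ∘ Tuple.sort d, Tuple.monotone_sort d, fun j => hdpos _, ?_,
    fun c hc hcprod => (sum_sort_sub_sq_le ha d).trans (hdmin c hc hcprod)⟩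
  simpa using (Equiv.prod_comp (Tuple.sort d) d).trans hdprod

end Minimization

section DistanceToSL

variable {n : ℕ}

lemma distSL_mul_mul_transpose {P Q : Matrix (Fin n) (Fin n) ℝ} (hP : Pᵀ * P = 1)
    (hQ : Qᵀ * Q = 1) (hPQ : P.det * Q.det = 1) (X : Matrix (Fin n) (Fin n) ℝ) :
    distSL (P * X * Qᵀ) = distSL X := by
  have hP' : P * Pᵀ = 1 := mul_eq_one_comm.mp hP
  have hQ' : Q * Qᵀ = 1 := mul_eq_one_comm.mp hQ
  unfold distSL
  congr 1
  ext r
  constructor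
  · rintro ⟨B, hB, rfl⟩
    refine ⟨Pᵀ * B * Q, ?_, ?_⟩
    · simp only [det_mul, det_transpose, hB, mul_one, hPQ]
    · rw [← frob_mul_mul_transpose hP hQ (X - Pᵀ * B * Q)]
      simp only [Matrix.mul_sub, Matrix.sub_mul, ← Matrix.mul_assoc, hP', Matrix.one_mul,
        Matrix.mul_assoc B, hQ', Matrix.mul_one]
  · rintro ⟨B, hB, rfl⟩
    refine ⟨P * B * Qᵀ, ?_, ?_⟩
    · simp only [det_mul, det_transpose, hB, mul_one, hPQ]
    · rw [← frob_mul_mul_transpose hP hQ (X - B), Matrix.mul_sub, Matrix.sub_mul]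

lemma exists_sum_sub_sq_le_sq_frob {a : Fin n → ℝ} (ha : Monotone a) (ha0 : ∀ i, 0 ≤ a i)
    {B : Matrix (Fin n) (Fin n) ℝ} (hB : B.det = 1) :
    ∃ c : Fin n → ℝ, (∀ j, 0 < c j) ∧ ∏ j, c j = 1 ∧
      ∑ j, (c j - a j) ^ 2 ≤ frob (diagonal a - B) ^ 2 := by
  obtain ⟨U, V, s, hU, hV, hs, rfl⟩ := exists_svd_of_det_ne_zero (B := B) (by simp [hB])
  have hsprod : ∏ i, s i = 1 := by
    have hUV := det_mul_det_eq_one_of_orthogonal hU hV (X := diagonal s)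
      (by simpa using Finset.prod_pos fun i _ => hs i) (by rw [hB]; exact one_pos)
    rw [det_mul, det_mul, det_transpose, det_diagonal] at hB
    linear_combination hB - (∏ i, s i) * hUV
  refine ⟨s ∘ Tuple.sort s, fun j => hs _, ?_, ?_⟩
  · simpa using (Equiv.prod_comp (Tuple.sort s) s).trans hsprod
  have htr := trace_diagonal_mul_le_sum_mul_sort ha ha0 (fun i => (hs i).le) hU hV
  have hsq : ∑ j, s (Tuple.sort s j) ^ 2 = ∑ j, s j ^ 2 :=
    Equiv.sum_comp (Tuple.sort s) fun j => s j ^ 2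
  have hcomm : ∑ j, s (Tuple.sort s j) * a j = ∑ j, a j * s (Tuple.sort s j) :=
    Finset.sum_congr rfl fun _ _ => mul_comm _ _
  rw [sq_frob_sub, sq_frob_diagonal, frob_mul_mul_transpose hU hV, sq_frob_diagonal,
    diagonal_transpose, sum_sub_sq]
  simp only [Function.comp_apply, hsq, hcomm]
  linarith

lemma sq_distSL_diagonal {a d : Fin n → ℝ} (ha : Monotone a) (ha0 : ∀ i, 0 ≤ a i)
    (hdprod : ∏ j, d j = 1)
    (hdmin : ∀ c : Fin n → ℝ, (∀ j, 0 < c j) → ∏ j, c j = 1 →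
      ∑ j, (d j - a j) ^ 2 ≤ ∑ j, (c j - a j) ^ 2) :
    distSL (diagonal a) ^ 2 = ∑ j, (d j - a j) ^ 2 := by
  have hd : frob (diagonal a - diagonal d) ^ 2 = ∑ j, (d j - a j) ^ 2 := by
    rw [diagonal_sub, sq_frob_diagonal]
    exact Finset.sum_congr rfl fun j _ => by ring
  have hleast : IsLeast
      {r | ∃ B : Matrix (Fin n) (Fin n) ℝ, B.det = 1 ∧ r = frob (diagonal a - B)}
      (frob (diagonal a - diagonal d)) := by
    refine ⟨⟨diagonal d, by simp [hdprod], rfl⟩, ?_⟩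
    rintro _ ⟨B, hB, rfl⟩
    obtain ⟨c, hc, hcprod, hcB⟩ := exists_sum_sub_sq_le_sq_frob ha ha0 hB
    refine (pow_le_pow_iff_left₀ (frob_nonneg _) (frob_nonneg _) two_ne_zero).1 ?_
    rw [hd]
    exact (hdmin c hc hcprod).trans hcB
  rw [distSL, hleast.csInf_eq, hd]

end DistanceToSL

theorem stmt_7_general (n : ℕ) (A : Matrix (Fin n) (Fin n) ℝ) (hdet : 0 < A.det)
    (a : Fin n → ℝ) (hapos : ∀ i, 0 < a i) (hmono : Monotone a)
    -- `a` consists of the singular values of `A` (in increasing order): the squares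
    -- `a i ^ 2` are the eigenvalues of `A * Aᵀ`, diagonalized by an orthogonal matrix.
    (M : Matrix (Fin n) (Fin n) ℝ) (hM : Mᵀ * M = 1)
    (hsv : Mᵀ * (A * Aᵀ) * M = Matrix.diagonal (fun i => a i ^ 2)) :
    distSL A ^ 2 =
      sInf {r : ℝ | ∃ c : Fin n → ℝ, (∀ j, 0 < c j) ∧ (∏ j, c j) = 1 ∧
        r = ∑ j, (c j - a j) ^ 2} ∧
    ∃ d : Fin n → ℝ, Monotone d ∧ (∀ j, 0 < d j) ∧ (∏ j, d j) = 1 ∧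
      ∑ j, (d j - a j) ^ 2 = distSL A ^ 2 := by
  obtain ⟨N, hN, hA⟩ := exists_eq_mul_diagonal_mul_transpose hM (fun i => (hapos i).ne') hsv
  have hMN : M.det * N.det = 1 := det_mul_det_eq_one_of_orthogonal hM hN
    (by simpa using Finset.prod_pos fun i _ => hapos i) (hA ▸ hdet)
  obtain ⟨d, hdmono, hdpos, hdprod, hdmin⟩ := exists_monotone_forall_sum_sub_sq_le hmono
  have hdist : distSL A ^ 2 = ∑ j, (d j - a j) ^ 2 := by
    rw [hA, distSL_mul_mul_transpose hM hN hMN]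
    exact sq_distSL_diagonal hmono (fun i => (hapos i).le) hdprod hdmin
  refine ⟨?_, d, hdmono, hdpos, hdprod, hdist.symm⟩
  rw [hdist]
  refine (IsLeast.csInf_eq ?_).symm
  refine ⟨⟨d, hdpos, hdprod, rfl⟩, ?_⟩
  rintro _ ⟨c, hc, hcprod, rfl⟩
  exact hdmin c hc hcprod

theorem stmt_7 (n : ℕ) (hn : 1 ≤ n) (A : Matrix (Fin n) (Fin n) ℝ) (hdet : 0 < A.det)
    (a : Fin n → ℝ) (hapos : ∀ i, 0 < a i) (hmono : Monotone a)
    -- `a` consists of the singular values of `A` (in increasing order): the squares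
    -- `a i ^ 2` are the eigenvalues of `A * Aᵀ`, diagonalized by an orthogonal matrix.
    (M : Matrix (Fin n) (Fin n) ℝ) (hM : Mᵀ * M = 1) (hM' : M * Mᵀ = 1)
    (hsv : Mᵀ * (A * Aᵀ) * M = Matrix.diagonal (fun i => a i ^ 2)) :
    distSL A ^ 2 =
      sInf {r : ℝ | ∃ c : Fin n → ℝ, (∀ j, 0 < c j) ∧ (∏ j, c j) = 1 ∧
        r = ∑ j, (c j - a j) ^ 2} ∧
    ∃ d : Fin n → ℝ, Monotone d ∧ (∀ j, 0 < d j) ∧ (∏ j, d j) = 1 ∧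
      ∑ j, (d j - a j) ^ 2 = distSL A ^ 2 :=
  stmt_7_general n A hdet a hapos hmono M hM hsv

end
end

section
/- Let A be a real n×n matrix with det A > 0 (in particular A is invertible). Then dist(A, SL(n)) ≤ (1/‖A^{−1}‖) |1 − 1/det A| ≤ (√n / |A^{−1}|) |1 − 1/det A|, where ‖·‖ is the operator norm and |·| the Frobenius norm. -/
/-!
Perturb `A` by a rank-one matrix `u yᵀ`. By the matrix determinant lemma
`det (A - u yᵀ) = det A * (1 - yᵀ A⁻¹ u)`, which is `1` as soon as `yᵀ A⁻¹ u = 1 - 1 / det A`,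
and `|u yᵀ| = |u| |y|`. Taking for `u` a unit vector on which `A⁻¹` attains its operator norm and
`y` parallel to `A⁻¹ u` gives `|y| = |1 - 1 / det A| / ‖A⁻¹‖`. The second inequality is
`|M| ≤ √n ‖M‖`: every column of `M` has Euclidean norm at most `‖M‖`.
-/

open Matrix

noncomputable section

/-- Operator norm of a real square matrix: `sup` of `|Av|` over unit vectors `v`. -/
def opnorm {n : ℕ} (A : Matrix (Fin n) (Fin n) ℝ) : ℝ :=
  sSup {r : ℝ | ∃ v : EuclideanSpace ℝ (Fin n), ‖v‖ = 1 ∧ r = ‖Matrix.toEuclideanLin A v‖}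

namespace Matrix

theorem det_sub_vecMulVec {m R : Type*} [Fintype m] [DecidableEq m] [CommRing R]
    {A : Matrix m m R} (hA : IsUnit A.det) (x y : m → R) :
    (A - vecMulVec x y).det = A.det * (1 - y ⬝ᵥ (A⁻¹ *ᵥ x)) := by
  rw [sub_eq_add_neg, ← neg_vecMulVec, vecMulVec_eq Unit, det_add_replicateCol_mul_replicateRow hA,
    Matrix.mul_assoc, ← replicateCol_mulVec, det_unique (1 + _), add_apply, one_apply_eq,
    replicateRow_mul_replicateCol_apply, mulVec_neg, dotProduct_neg, sub_eq_add_neg]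

end Matrix

theorem frob_vecMulVec {ι : Type*} [Fintype ι] (x y : EuclideanSpace ℝ ι) :
    frob (vecMulVec x.ofLp y.ofLp) = ‖x‖ * ‖y‖ := by
  rw [frob, ← Real.sqrt_sq (norm_nonneg x), ← Real.sqrt_sq (norm_nonneg y),
    ← Real.sqrt_mul (sq_nonneg _), EuclideanSpace.real_norm_sq_eq, EuclideanSpace.real_norm_sq_eq,
    Finset.sum_mul_sum]
  simp only [vecMulVec_apply, mul_pow]

theorem frob_pos {ι : Type*} [Fintype ι] {M : Matrix ι ι ℝ} (hM : M ≠ 0) : 0 < frob M := by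
  obtain ⟨i, j, hij⟩ : ∃ i j, M i j ≠ 0 := by
    by_contra! h
    exact hM (Matrix.ext h)
  have hrow : 0 < ∑ l, M i l ^ 2 :=
    Finset.sum_pos' (fun _ _ => sq_nonneg _) ⟨j, Finset.mem_univ _, by positivity⟩
  exact Real.sqrt_pos_of_pos <| Finset.sum_pos'
    (fun _ _ => Finset.sum_nonneg fun _ _ => sq_nonneg _) ⟨i, Finset.mem_univ _, hrow⟩

theorem frob_le_sqrt_card_mul_norm_toEuclideanCLM {ι : Type*} [Fintype ι] [DecidableEq ι]
    (M : Matrix ι ι ℝ) : frob M ≤ √(Fintype.card ι) * ‖toEuclideanCLM (n := ι) (𝕜 := ℝ) M‖ := by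
  have hcol : ∀ j, ∑ i, M i j ^ 2 ≤ ‖toEuclideanCLM (n := ι) (𝕜 := ℝ) M‖ ^ 2 := fun j => by
    have hle := (toEuclideanCLM (n := ι) (𝕜 := ℝ) M).le_opNorm (EuclideanSpace.single j 1)
    rw [PiLp.norm_single, norm_one, mul_one] at hle
    simpa [EuclideanSpace.real_norm_sq_eq, mulVec_single] using
      pow_le_pow_left₀ (norm_nonneg _) hle 2
  calc frob M ≤ √(∑ _j : ι, ‖toEuclideanCLM (n := ι) (𝕜 := ℝ) M‖ ^ 2) := by
        rw [frob, Finset.sum_comm]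
        exact Real.sqrt_le_sqrt (Finset.sum_le_sum fun j _ => hcol j)
    _ = _ := by
        rw [Finset.sum_const, Finset.card_univ, nsmul_eq_mul, Real.sqrt_mul (Nat.cast_nonneg _),
          Real.sqrt_sq (norm_nonneg _)]

theorem ContinuousLinearMap.exists_norm_eq_one_norm_apply_eq_opNorm {E F : Type*}
    [NormedAddCommGroup E] [NormedSpace ℝ E] [FiniteDimensional ℝ E] [Nontrivial E]
    [NormedAddCommGroup F] [NormedSpace ℝ F] (f : E →L[ℝ] F) :
    ∃ x, ‖x‖ = 1 ∧ ‖f x‖ = ‖f‖ := by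
  obtain ⟨x, hx, hmax⟩ := (isCompact_sphere (0 : E) 1).exists_isMaxOn
    (NormedSpace.sphere_nonempty.mpr zero_le_one) (continuous_norm.comp f.continuous).continuousOn
  have hx1 : ‖x‖ = 1 := mem_sphere_zero_iff_norm.mp hx
  refine ⟨x, hx1, le_antisymm (by simpa [hx1] using f.le_opNorm x) ?_⟩
  rw [← f.sSup_sphere_eq_norm]
  exact csSup_le ⟨_, x, hx, rfl⟩ (by rintro _ ⟨y, hy, rfl⟩; exact hmax hy)

theorem opnorm_eq_norm_toEuclideanCLM {n : ℕ} (M : Matrix (Fin n) (Fin n) ℝ) :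
    opnorm M = ‖toEuclideanCLM (n := Fin n) (𝕜 := ℝ) M‖ := by
  rw [opnorm, ← ContinuousLinearMap.sSup_sphere_eq_norm]
  congr 1
  ext r
  simp only [Set.mem_ofPred_eq, Set.mem_image, mem_sphere_iff_norm, sub_zero, eq_comm (a := r)]
  rfl

theorem distSL_le {n : ℕ} (A B : Matrix (Fin n) (Fin n) ℝ) (hB : B.det = 1) :
    distSL A ≤ frob (A - B) :=
  csInf_le ⟨0, by rintro _ ⟨_, _, rfl⟩; exact Real.sqrt_nonneg _⟩ ⟨B, hB, rfl⟩

theorem distSL_le_frob_vecMulVec {n : ℕ} {A : Matrix (Fin n) (Fin n) ℝ} (hA : IsUnit A.det)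
    {x y : Fin n → ℝ} (hxy : y ⬝ᵥ (A⁻¹ *ᵥ x) = 1 - A.det⁻¹) :
    distSL A ≤ frob (vecMulVec x y) := by
  have hdet : (A - vecMulVec x y).det = 1 := by
    rw [det_sub_vecMulVec hA, hxy, sub_sub_cancel, mul_inv_cancel₀ hA.ne_zero]
  simpa only [sub_sub_cancel] using distSL_le A _ hdet

theorem distSL_le_inv_norm_mul {n : ℕ} {A : Matrix (Fin n) (Fin n) ℝ} (hA : IsUnit A.det)
    {u : EuclideanSpace ℝ (Fin n)} (hu : ‖u‖ = 1) :
    distSL A ≤ ‖toEuclideanCLM (n := Fin n) (𝕜 := ℝ) A⁻¹ u‖⁻¹ * |1 - A.det⁻¹| := by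
  set w := toEuclideanCLM (n := Fin n) (𝕜 := ℝ) A⁻¹ u
  set c := 1 - A.det⁻¹
  have hw : ‖w‖ ≠ 0 := by
    have hAw : toEuclideanCLM (n := Fin n) (𝕜 := ℝ) A w = u := by
      rw [← mul_apply_eq_comp, ← map_mul, mul_nonsing_inv A hA, map_one, one_apply_eq_self]
    intro h
    rw [norm_eq_zero.mp h, map_zero] at hAw
    simp [← hAw] at hu
  set y : EuclideanSpace ℝ (Fin n) := (c / ‖w‖ ^ 2) • w
  have hxy : y.ofLp ⬝ᵥ (A⁻¹ *ᵥ u.ofLp) = c := by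
    rw [← ofLp_toEuclideanCLM, WithLp.ofLp_smul, smul_dotProduct, smul_eq_mul]
    have hww : w.ofLp ⬝ᵥ w.ofLp = ‖w‖ ^ 2 := by
      rw [EuclideanSpace.real_norm_sq_eq, dotProduct]
      simp only [sq]
    rw [hww]
    field_simp
  calc distSL A ≤ frob (vecMulVec u.ofLp y.ofLp) := distSL_le_frob_vecMulVec hA hxy
    _ = ‖u‖ * ‖y‖ := frob_vecMulVec u y
    _ = ‖w‖⁻¹ * |c| := by
      rw [hu, norm_smul, Real.norm_eq_abs, abs_div, abs_of_nonneg (sq_nonneg ‖w‖)]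
      field_simp

theorem distSL_le_inv_opnorm_mul {n : ℕ} [Nonempty (Fin n)] {A : Matrix (Fin n) (Fin n) ℝ}
    (hA : IsUnit A.det) : distSL A ≤ (opnorm A⁻¹)⁻¹ * |1 - A.det⁻¹| := by
  obtain ⟨u, hu, hnorm⟩ :=
    (toEuclideanCLM (n := Fin n) (𝕜 := ℝ) A⁻¹).exists_norm_eq_one_norm_apply_eq_opNorm
  rw [opnorm_eq_norm_toEuclideanCLM, ← hnorm]
  exact distSL_le_inv_norm_mul hA hu

theorem inv_opnorm_le_sqrt_div_frob {n : ℕ} {M : Matrix (Fin n) (Fin n) ℝ} (hM : M ≠ 0) :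
    (opnorm M)⁻¹ ≤ √n / frob M := by
  have hfrob := frob_pos hM
  have hle : frob M ≤ √n * opnorm M := by
    simpa [opnorm_eq_norm_toEuclideanCLM] using frob_le_sqrt_card_mul_norm_toEuclideanCLM M
  have hop : 0 < opnorm M := pos_of_mul_pos_right (hfrob.trans_le hle) (Real.sqrt_nonneg _)
  rw [le_div_iff₀ hfrob, inv_mul_le_iff₀ hop]
  linarith

theorem stmt_8_general (n : ℕ) (A : Matrix (Fin n) (Fin n) ℝ) (hdet : 0 < A.det) :
    distSL A ≤ (opnorm A⁻¹)⁻¹ * |1 - (A.det)⁻¹| ∧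
    (opnorm A⁻¹)⁻¹ * |1 - (A.det)⁻¹| ≤ (Real.sqrt n / frob A⁻¹) * |1 - (A.det)⁻¹| := by
  rcases isEmpty_or_nonempty (Fin n) with _ | _
  · have hc : |1 - A.det⁻¹| = 0 := by simp [det_isEmpty]
    simp only [hc, mul_zero, le_refl, and_true]
    simpa [frob] using distSL_le A A det_isEmpty
  · have hA : IsUnit A.det := hdet.ne'.isUnit
    have hAinv : A⁻¹ ≠ 0 := fun h => by simpa [h] using isUnit_nonsing_inv_det A hA
    exact ⟨distSL_le_inv_opnorm_mul hA,
      mul_le_mul_of_nonneg_right (inv_opnorm_le_sqrt_div_frob hAinv) (abs_nonneg _)⟩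

theorem stmt_8 (n : ℕ) (hn : 1 ≤ n) (A : Matrix (Fin n) (Fin n) ℝ) (hdet : 0 < A.det) :
    distSL A ≤ (opnorm A⁻¹)⁻¹ * |1 - (A.det)⁻¹| ∧
    (opnorm A⁻¹)⁻¹ * |1 - (A.det)⁻¹| ≤ (Real.sqrt n / frob A⁻¹) * |1 - (A.det)⁻¹| :=
  stmt_8_general n A hdet

end
end

section
/- For every n ≥ 1 there exists a constant C_4 = C_4(n) > 0 such that for every θ with 0 < θ ≤ 1/2 and every real n×n matrix A with det A ≥ θ, one has (1/|A^{−1}|) |1 − 1/det A| ≤ (C_4/θ) · dist(A, SL(n)), where |·| is the Frobenius norm. -/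
/-!
For `B ∈ SL(n)` put `K = A⁻¹ (A - B)`. Then `1 - K = A⁻¹ B` has determinant `1 / det A` and
`|K| ≤ |A⁻¹| |A - B|`, so it suffices to bound `|1 - det (1 - K)|` by a multiple of `|K|`.
Since `det` is `C¹`, it is Lipschitz near `1`, which gives such a bound for `|K| ≤ ε`.
For `|K| > ε` one uses instead `|1 - det (1 - K)| ≤ max 1 (1 / det A) ≤ 1 / θ < |K| / (ε θ)`.
Taking the infimum over `B` gives the estimate with `C₄ = L + 1 / ε`.
-/

open Matrix

noncomputable section

open scoped NNReal

attribute [local instance] Matrix.frobeniusNormedAddCommGroup Matrix.frobeniusNormedSpace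

theorem frob_eq_norm {ι : Type*} [Fintype ι] (A : Matrix ι ι ℝ) : frob A = ‖A‖ := by
  simp only [frob, frobenius_norm_def, Real.norm_eq_abs, Real.rpow_two, sq_abs,
    Real.sqrt_eq_rpow, one_div]

theorem le_distSL {n : ℕ} {A : Matrix (Fin n) (Fin n) ℝ} {r : ℝ}
    (h : ∀ B : Matrix (Fin n) (Fin n) ℝ, B.det = 1 → r ≤ ‖A - B‖) : r ≤ distSL A :=
  le_csInf ⟨_, 1, det_one, rfl⟩ <| by
    rintro _ ⟨B, hB, rfl⟩
    exact frob_eq_norm (A - B) ▸ h B hB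

namespace Matrix

variable {m : Type*} [Fintype m] [DecidableEq m]

theorem contDiff_det : ContDiff ℝ 1 (det : Matrix m m ℝ → ℝ) := by
  simp only [funext det_apply]
  refine ContDiff.sum fun σ _ => ContDiff.const_smul _ (contDiff_prod fun i _ => ?_)
  exact (LinearMap.toContinuousLinearMap (entryLinearMap ℝ ℝ (σ i) i)).contDiff

theorem exists_abs_det_one_sub_sub_one_le :
    ∃ ε > 0, ∃ L : ℝ≥0, ∀ K : Matrix m m ℝ, ‖K‖ ≤ ε → |(1 - K).det - 1| ≤ L * ‖K‖ := by
  obtain ⟨L, t, ht, hL⟩ := (contDiff_det (m := m)).contDiffAt.exists_lipschitzOnWith (x := 1)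
  obtain ⟨ε, hε, hball⟩ := Metric.mem_nhds_iff.mp ht
  refine ⟨ε / 2, half_pos hε, L, fun K hK => ?_⟩
  have h1K : 1 - K ∈ t := hball <| by
    simpa [dist_eq_norm] using hK.trans_lt (half_lt_self hε)
  simpa [Real.dist_eq, dist_eq_norm] using hL.dist_le_mul _ h1K _ (mem_of_mem_nhds ht)

theorem exists_abs_one_sub_det_one_sub_le :
    ∃ C > 0, ∀ K : Matrix m m ℝ, 0 ≤ (1 - K).det →
      |1 - (1 - K).det| ≤ C * (max 1 (1 - K).det * ‖K‖) := by
  obtain ⟨ε, hε, L, hL⟩ := exists_abs_det_one_sub_sub_one_le (m := m)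
  refine ⟨L + ε⁻¹, by positivity, fun K hK => ?_⟩
  have hmax : 1 ≤ max 1 (1 - K).det := le_max_left _ _
  rcases le_or_gt ‖K‖ ε with hsmall | hlarge
  · calc |1 - (1 - K).det| ≤ L * ‖K‖ := abs_sub_comm (1 : ℝ) _ ▸ hL K hsmall
      _ ≤ (L + ε⁻¹) * (max 1 (1 - K).det * ‖K‖) := by
        gcongr
        · exact le_add_of_nonneg_right (by positivity)
        · exact le_mul_of_one_le_left (norm_nonneg K) hmax
  · have habs : |1 - (1 - K).det| ≤ max 1 (1 - K).det :=
      abs_le.mpr ⟨by linarith [le_max_right 1 (1 - K).det], by linarith⟩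
    have hK : 1 < ε⁻¹ * ‖K‖ := by rwa [← div_eq_inv_mul, one_lt_div hε]
    calc |1 - (1 - K).det| ≤ max 1 (1 - K).det * (ε⁻¹ * ‖K‖) :=
          habs.trans (le_mul_of_one_le_right (by positivity) hK.le)
      _ ≤ (L + ε⁻¹) * (max 1 (1 - K).det * ‖K‖) := by
        rw [mul_left_comm]
        gcongr
        exact le_add_of_nonneg_left L.2

theorem exists_mul_inv_norm_inv_mul_abs_one_sub_inv_det_le :
    ∃ C > 0, ∀ θ : ℝ, 0 < θ → θ ≤ 1 → ∀ A B : Matrix m m ℝ, θ ≤ A.det → B.det = 1 →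
      θ * (‖A⁻¹‖⁻¹ * |1 - A.det⁻¹|) ≤ C * ‖A - B‖ := by
  obtain ⟨C, hC, hbound⟩ := exists_abs_one_sub_det_one_sub_le (m := m)
  refine ⟨C, hC, fun θ hθ hθ1 A B hA hB => ?_⟩
  have hdetA : 0 < A.det := hθ.trans_le hA
  have hdet : (1 - A⁻¹ * (A - B)).det = A.det⁻¹ := by
    rw [mul_sub, nonsing_inv_mul _ (isUnit_iff_ne_zero.mpr hdetA.ne'), sub_sub_cancel, det_mul,
      hB, mul_one, det_nonsing_inv, Ring.inverse_eq_inv']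
  have hK := hbound (A⁻¹ * (A - B)) (hdet ▸ inv_nonneg.mpr hdetA.le)
  rw [hdet] at hK
  have hθmax : θ * max 1 A.det⁻¹ ≤ 1 := by
    rw [mul_max_of_nonneg _ _ hθ.le, mul_one, ← div_eq_mul_inv]
    exact max_le hθ1 ((div_le_one hdetA).mpr hA)
  rw [mul_left_comm]
  refine inv_mul_le_of_le_mul₀ (norm_nonneg _) (by positivity) ?_
  calc θ * |1 - A.det⁻¹| ≤ θ * (C * (max 1 A.det⁻¹ * ‖A⁻¹ * (A - B)‖)) := by gcongr
    _ = C * (θ * max 1 A.det⁻¹) * ‖A⁻¹ * (A - B)‖ := by ring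
    _ ≤ C * 1 * (‖A⁻¹‖ * ‖A - B‖) := by gcongr; exact frobenius_norm_mul _ _
    _ = ‖A⁻¹‖ * (C * ‖A - B‖) := by ring

end Matrix

theorem stmt_9_general (n : ℕ) :
    ∃ C₄ : ℝ, 0 < C₄ ∧
      ∀ θ : ℝ, 0 < θ → θ ≤ 1 / 2 →
        ∀ A : Matrix (Fin n) (Fin n) ℝ, θ ≤ A.det →
          (frob A⁻¹)⁻¹ * |1 - (A.det)⁻¹| ≤ (C₄ / θ) * distSL A := by
  obtain ⟨C, hC, hbound⟩ := exists_mul_inv_norm_inv_mul_abs_one_sub_inv_det_le (m := Fin n)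
  refine ⟨C, hC, fun θ hθ hθ2 A hA => ?_⟩
  have hdist : θ / C * ((frob A⁻¹)⁻¹ * |1 - A.det⁻¹|) ≤ distSL A := le_distSL fun B hB => by
    rw [frob_eq_norm, div_mul_eq_mul_div, div_le_iff₀ hC, mul_comm _ C]
    exact hbound θ hθ (by linarith) A B hA hB
  calc (frob A⁻¹)⁻¹ * |1 - A.det⁻¹| = C / θ * (θ / C * ((frob A⁻¹)⁻¹ * |1 - A.det⁻¹|)) := by
        field_simp
    _ ≤ C / θ * distSL A := by gcongr

theorem stmt_9 (n : ℕ) (hn : 1 ≤ n) :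
    ∃ C₄ : ℝ, 0 < C₄ ∧
      ∀ θ : ℝ, 0 < θ → θ ≤ 1 / 2 →
        ∀ A : Matrix (Fin n) (Fin n) ℝ, θ ≤ A.det →
          (frob A⁻¹)⁻¹ * |1 - (A.det)⁻¹| ≤ (C₄ / θ) * distSL A :=
  stmt_9_general n

end
end
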